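/- Let F : C → B be a Galois covering of k-categories, let x_b ∈ F⁻¹(b) be a choice of fibre objects with induced Aut₁F-grading Z, and let (t_b) be a family of elements of Aut₁F, giving the second choice of fibre objects t_b·x_b with induced grading Z'. Let χ : Aut₁F → k be an additive character (χ(st) = χ(s) + χ(t)), and let D and D' be families of k-linear endomorphisms of the morphism modules of B satisfying D(f) = χ(s) • f for f ∈ Z_s(c,b) and D'(f) = χ(s) • f for f ∈ Z'_s(c,b). Then for every morphism f ∈ B(b,c), D(f) − D'(f) = (χ(t_c) − χ(t_b)) • f; in particular D − D' is the inner derivation associated to the family α_b = χ(t_b) • id_b. -/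

import Mathlib

open CategoryTheory

universe w v u

section CoveringDefs

variable (k : Type w) [CommRing k]

/-- A functor between `k`-linear categories is `k`-linear:
it is additive and commutes with the scalar action on morphisms. -/
def IsLinearFunctor {C : Type u} [Category.{v} C] [Preadditive C] [CategoryTheory.Linear k C]
    {B : Type u} [Category.{v} B] [Preadditive B] [CategoryTheory.Linear k B]
    (F : C ⥤ B) : Prop :=
  (∀ (x y : C) (f g : x ⟶ y), F.map (f + g) = F.map f + F.map g) ∧
  (∀ (x y : C) (r : k) (f : x ⟶ y), F.map (r • f) = r • F.map f)

variable {C : Type u} [Category.{v} C] [Preadditive C] [CategoryTheory.Linear k C]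
variable {B : Type u} [Category.{v} B] [Preadditive B] [CategoryTheory.Linear k B]

/-- The canonical map `⊕_{y ∈ F⁻¹(c)} C(x,y) →+ B(F(x),c)` induced by `F`
on the source star. -/
noncomputable def starOutHom (F : C ⥤ B) (hF : IsLinearFunctor k F) (x : C) (c : B) :
    (DirectSum {y : C // F.obj y = c} (fun y => (x ⟶ y.1))) →+ (F.obj x ⟶ c) := by
  classical
  exact DirectSum.toAddMonoid fun y =>
    AddMonoidHom.mk' (fun f => F.map f ≫ eqToHom y.2)
      (fun f g => by (try simp only []); rw [hF.1 _ _ f g, Preadditive.add_comp])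

/-- The canonical map `⊕_{y ∈ F⁻¹(c)} C(y,x) →+ B(c,F(x))` induced by `F`
on the target star. -/
noncomputable def starInHom (F : C ⥤ B) (hF : IsLinearFunctor k F) (x : C) (c : B) :
    (DirectSum {y : C // F.obj y = c} (fun y => (y.1 ⟶ x))) →+ (c ⟶ F.obj x) := by
  classical
  exact DirectSum.toAddMonoid fun y =>
    AddMonoidHom.mk' (fun f => eqToHom y.2.symm ≫ F.map f)
      (fun f g => by (try simp only []); rw [hF.1 _ _ f g, Preadditive.comp_add])

/-- `F : C ⥤ B` is a covering of `k`-categories: it is a `k`-linear functor,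
surjective on objects, inducing bijections on all source and target stars. -/
def IsCovering (F : C ⥤ B) : Prop :=
  ∃ hF : IsLinearFunctor k F,
    Function.Surjective F.obj ∧
    (∀ (x : C) (c : B), Function.Bijective (starOutHom k F hF x c)) ∧
    (∀ (x : C) (c : B), Function.Bijective (starInHom k F hF x c))

end CoveringDefs

/-- A `k`-category is connected if the equivalence relation generated by
"there is a nonzero morphism from `x` to `y`" relates any two objects. -/
def IsConnectedKCat (C : Type u) [Category.{v} C] [Preadditive C] : Prop :=
  ∀ x y : C, Relation.EqvGen (fun a b : C => ∃ f : a ⟶ b, f ≠ 0) x y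

section GaloisDefs

variable (k : Type w) [CommRing k]
variable {C : Type u} [Category.{v} C] [Preadditive C] [CategoryTheory.Linear k C]
variable {B : Type u} [Category.{v} B] [Preadditive B] [CategoryTheory.Linear k B]
variable {D : Type u} [Category.{v} D] [Preadditive D] [CategoryTheory.Linear k D]

/-- `H` belongs to `Aut₁ F`: it is an invertible `k`-linear endofunctor with `F ∘ H = F`. -/
def MemAut1 (F : C ⥤ B) (H : C ⥤ C) : Prop :=
  IsLinearFunctor k H ∧
  (∃ Hinv : C ⥤ C, H ⋙ Hinv = 𝟭 C ∧ Hinv ⋙ H = 𝟭 C) ∧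
  H ⋙ F = F

/-- A covering is Galois if its source is connected and `Aut₁ F` acts transitively
on some fibre. -/
def IsGaloisCovering (F : C ⥤ B) : Prop :=
  IsCovering k F ∧ IsConnectedKCat C ∧
  ∃ b₀ : B, ∀ x y : C, F.obj x = b₀ → F.obj y = b₀ →
    ∃ H : C ⥤ C, MemAut1 k F H ∧ H.obj x = y

/-- A morphism `(H, J)` of coverings from `F : C ⥤ B` to `G : D ⥤ B`:
`H` and `J` are `k`-linear, `J` is an isomorphism which is the identity on objects,
and `G ∘ H = J ∘ F`. -/
def IsCoveringMorphism (F : C ⥤ B) (G : D ⥤ B) (H : C ⥤ D) (J : B ⥤ B) : Prop :=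
  IsLinearFunctor k H ∧ IsLinearFunctor k J ∧
  (∃ Jinv : B ⥤ B, J ⋙ Jinv = 𝟭 B ∧ Jinv ⋙ J = 𝟭 B) ∧
  (∀ b : B, J.obj b = b) ∧
  H ⋙ G = F ⋙ J

end GaloisDefs

/-- A universal covering: a Galois covering `U` such that for every Galois covering
`F : C ⥤ B` and every pair of objects `u₀`, `c₀` above the same object of `B`,
there is a unique `k`-linear functor `H` with `F ∘ H = U` and `H u₀ = c₀`. -/
def IsUniversalCovering (k : Type w) [CommRing k]
    {U' : Type u} [Category.{v} U'] [Preadditive U'] [CategoryTheory.Linear k U']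
    {B : Type u} [Category.{v} B] [Preadditive B] [CategoryTheory.Linear k B]
    (U : U' ⥤ B) : Prop :=
  IsGaloisCovering k U ∧
  ∀ (C : Type u) [Category.{v} C] [Preadditive C] [CategoryTheory.Linear k C]
    (F : C ⥤ B), IsGaloisCovering k F →
    ∀ (u₀ : U') (c₀ : C), U.obj u₀ = F.obj c₀ →
      ∃! H : U' ⥤ C, IsLinearFunctor k H ∧ H ⋙ F = U ∧ H.obj u₀ = c₀

/-- Given a functor `F : C ⥤ B`, a choice `x` of objects of `C` above each object of `B`,
and an endofunctor `H` of `C`, the subset `Z_H(c,b) = F(C(x_b, H x_c))` of `B(b,c)`. -/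
def gradeSet {C : Type u} [Category.{v} C] {B : Type u} [Category.{v} B]
    (F : C ⥤ B) (x : B → C) (H : C ⥤ C) (b c : B) : Set (b ⟶ c) :=
  {g | ∃ (h₁ : b = F.obj (x b)) (h₂ : F.obj (H.obj (x c)) = c)
        (f : x b ⟶ H.obj (x c)), g = eqToHom h₁ ≫ F.map f ≫ eqToHom h₂}

/-- The homogeneous component `Z_H(c,b)` as a `k`-submodule of `B(b,c)`. -/
noncomputable def gradeSubmodule (k : Type w) [CommRing k]
    {C : Type u} [Category.{v} C]
    {B : Type u} [Category.{v} B] [Preadditive B] [CategoryTheory.Linear k B]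
    (F : C ⥤ B) (x : B → C) (H : C ⥤ C) (b c : B) : Submodule k (b ⟶ c) :=
  Submodule.span k (gradeSet F x H b c)

/-!
Every morphism `f : b ⟶ c` is a sum of homogeneous ones: the star bijection at `x b` writes `f`
as a sum of images `F u` of morphisms `u : x b ⟶ w` with `w` above `c`, and `w = s · x c` for
some `s ∈ Aut₁ F` because `Aut₁ F` acts transitively on every fibre. (Transitivity spreads from
one fibre to the next along a nonzero `f : y ⟶ z`: lifting `F f` through the star at `z'` and
translating each summand so that it starts at `y`, injectivity of the star at `y` forces one of
the translates to end at `z`; connectedness then reaches every fibre.) A morphism of `Z_s(c,b)`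
lies in `Z'_{s'}(c,b)` for `s' = t_b s t_c⁻¹`, so `D - D'` acts on it by
`χ s - χ s' = χ t_c - χ t_b`.
-/

open DirectSum

theorem DirectSum.eq_zero_of_forall_exists_component_eq_zero {ι κ G : Type*}
    [DecidableEq ι] [DecidableEq κ] {M : ι → Type*} {N : κ → Type*}
    [∀ i, AddCommMonoid (M i)] [∀ j, AddCommMonoid (N j)] [AddCommMonoid G]
    {φ : (⨁ i, M i) →+ G} {ψ : (⨁ j, N j) →+ G}
    (hφ : Function.Surjective φ) (hψ : Function.Injective ψ) {j₀ : κ}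
    (h : ∀ i (m : M i), ∃ η : ⨁ j, N j, η j₀ = 0 ∧ ψ η = φ (of M i m))
    (n : N j₀) : n = 0 := by
  have hrange : ∀ ξ, ∃ η : ⨁ j, N j, η j₀ = 0 ∧ ψ η = φ ξ := by
    intro ξ
    induction ξ using DirectSum.induction_on with
    | zero => exact ⟨0, rfl, by simp⟩
    | of i m => exact h i m
    | add ξ ξ' ih ih' =>
      obtain ⟨η, h0, hη⟩ := ih
      obtain ⟨η', h0', hη'⟩ := ih'
      exact ⟨η + η', by simp [h0, h0'], by simp [hη, hη']⟩
  obtain ⟨ξ, hξ⟩ := hφ (ψ (of N j₀ n))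
  obtain ⟨η, h0, hη⟩ := hrange ξ
  rw [hψ (hη.trans hξ), of_eq_same] at h0
  exact h0

theorem IsLinearFunctor.of_comp_eq_id {k : Type w} [CommRing k]
    {C : Type u} [Category.{v} C] [Preadditive C] [CategoryTheory.Linear k C]
    {D : Type u} [Category.{v} D] [Preadditive D] [CategoryTheory.Linear k D]
    {H : C ⥤ D} {Hi : D ⥤ C} (hH : IsLinearFunctor k H) (h₁ : H ⋙ Hi = 𝟭 C)
    (h₂ : Hi ⋙ H = 𝟭 D) : IsLinearFunctor k Hi := by
  let e : C ≌ D := CategoryTheory.Equivalence.mk H Hi (eqToIso h₁.symm) (eqToIso h₂)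
  have : e.functor.Additive := ⟨hH.1 _ _ _ _⟩
  have : e.functor.Linear k := ⟨fun f r => hH.2 _ _ r f⟩
  exact ⟨fun _ _ f g => e.inverse.map_add (f := f) (g := g),
    fun _ _ r f => e.inverse.map_smul r f⟩

theorem Functor.map_map_of_comp_eq_self {C B : Type*} [Category* C] [Category* B] {F : C ⥤ B} {H : C ⥤ C} (hH : H ⋙ F = F) {y z : C} (f : y ⟶ z) :
    F.map (H.map f) =
      eqToHom (Functor.congr_obj hH y) ≫ F.map f ≫ eqToHom (Functor.congr_obj hH z).symm :=
  Functor.congr_hom hH f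

theorem gradeSet_subset_gradeSet_translate {C : Type u} [Category.{v} C] {B : Type u}
    [Category.{v} B] {F : C ⥤ B} {x : B → C} {t : B → C ⥤ C} {s Hi : C ⥤ C} {b c : B}
    (htb : t b ⋙ F = F) (hHi : Hi.obj ((t c).obj (x c)) = x c) :
    gradeSet F x s b c ⊆ gradeSet F (fun b => (t b).obj (x b)) (Hi ⋙ s ⋙ t b) b c := by
  rintro g ⟨h₁, h₂, f, rfl⟩
  have hobj : (Hi ⋙ s ⋙ t b).obj ((t c).obj (x c)) = (t b).obj (s.obj (x c)) := by
    simp [hHi]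
  refine ⟨h₁.trans (Functor.congr_obj htb (x b)).symm, ?_, (t b).map f ≫ eqToHom hobj.symm, ?_⟩
  · rw [hobj]
    exact (Functor.congr_obj htb _).trans h₂
  · simp [Functor.map_map_of_comp_eq_self htb f, eqToHom_map]

section Aut1

variable {k : Type w} [CommRing k]
variable {C : Type u} [Category.{v} C] [Preadditive C] [CategoryTheory.Linear k C]
variable {B : Type u} [Category.{v} B] {F : C ⥤ B}

theorem memAut1_id : MemAut1 k F (𝟭 C) :=
  ⟨⟨fun _ _ _ _ => rfl, fun _ _ _ _ => rfl⟩, ⟨𝟭 C, rfl, rfl⟩, Functor.id_comp F⟩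

theorem MemAut1.comp {H H' : C ⥤ C} (hH : MemAut1 k F H) (hH' : MemAut1 k F H') :
    MemAut1 k F (H ⋙ H') := by
  obtain ⟨⟨hadd, hsmul⟩, ⟨Hi, hi₁, hi₂⟩, hF⟩ := hH
  obtain ⟨⟨hadd', hsmul'⟩, ⟨Hi', hi₁', hi₂'⟩, hF'⟩ := hH'
  refine ⟨⟨fun _ _ f g => ?_, fun _ _ r f => ?_⟩, ⟨Hi' ⋙ Hi, ?_, ?_⟩, ?_⟩
  · simp only [Functor.comp_map, hadd, hadd']
  · simp only [Functor.comp_map, hsmul, hsmul']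
  · rw [Functor.assoc, ← Functor.assoc H', hi₁', Functor.id_comp, hi₁]
  · rw [Functor.assoc, ← Functor.assoc Hi, hi₂, Functor.id_comp, hi₂']
  · rw [Functor.assoc, hF', hF]

theorem MemAut1.exists_inv {H : C ⥤ C} (hH : MemAut1 k F H) :
    ∃ Hi, MemAut1 k F Hi ∧ H ⋙ Hi = 𝟭 C ∧ Hi ⋙ H = 𝟭 C := by
  obtain ⟨hlin, ⟨Hi, h₁, h₂⟩, hF⟩ := hH
  refine ⟨Hi, ⟨hlin.of_comp_eq_id h₁ h₂, ⟨H, h₂, h₁⟩, ?_⟩, h₁, h₂⟩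
  conv_lhs => rw [← hF]
  rw [← Functor.assoc, h₂, Functor.id_comp]

theorem map_eq_neg_of_comp_eq_id {χ : (C ⥤ C) → k}
    (hχ : ∀ s s' : C ⥤ C, MemAut1 k F s → MemAut1 k F s' → χ (s ⋙ s') = χ s + χ s')
    {H Hi : C ⥤ C} (hH : MemAut1 k F H) (hHi : MemAut1 k F Hi) (h : H ⋙ Hi = 𝟭 C) :
    χ Hi = -χ H := by
  have hid := hχ (𝟭 C) (𝟭 C) memAut1_id memAut1_id
  have hcomp := hχ H Hi hH hHi
  rw [Functor.id_comp] at hid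
  rw [h] at hcomp
  linear_combination -hcomp - hid

variable (k F) in
def SameAut1Orbit (y y' : C) : Prop :=
  ∃ H, MemAut1 k F H ∧ H.obj y = y'

theorem SameAut1Orbit.symm {y y' : C} (h : SameAut1Orbit k F y y') : SameAut1Orbit k F y' y := by
  obtain ⟨H, hH, rfl⟩ := h
  obtain ⟨Hi, hHi, h₁, -⟩ := hH.exists_inv
  exact ⟨Hi, hHi, Functor.congr_obj h₁ y⟩

theorem SameAut1Orbit.trans {y y' y'' : C} (h : SameAut1Orbit k F y y')
    (h' : SameAut1Orbit k F y' y'') : SameAut1Orbit k F y y'' := by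
  obtain ⟨H, hH, rfl⟩ := h
  obtain ⟨H', hH', rfl⟩ := h'
  exact ⟨H ⋙ H', hH.comp hH', rfl⟩

variable (k F) in
def Aut1TransitiveOnFibre (b : B) : Prop :=
  ∀ y y' : C, F.obj y = b → F.obj y' = b → SameAut1Orbit k F y y'

theorem aut1TransitiveOnFibre_of_forall_sameAut1Orbit {y : C}
    (h : ∀ y', F.obj y' = F.obj y → SameAut1Orbit k F y' y) :
    Aut1TransitiveOnFibre k F (F.obj y) :=
  fun _ _ h₁ h₂ => (h _ h₁).trans (h _ h₂).symm

end Aut1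

section Covering

variable {k : Type w} [CommRing k]
variable {C : Type u} [Category.{v} C] [Preadditive C] [CategoryTheory.Linear k C]
variable {B : Type u} [Category.{v} B] [Preadditive B] [CategoryTheory.Linear k B]
variable {F : C ⥤ B}

open Classical in
theorem starOutHom_of (hF : IsLinearFunctor k F) (x : C) (c : B) (y : {y : C // F.obj y = c})
    (f : x ⟶ y.1) :
    starOutHom k F hF x c (of (fun y : {y : C // F.obj y = c} => x ⟶ y.1) y f) =
      F.map f ≫ eqToHom y.2 :=
  toAddMonoid_of _ _ _

open Classical in
theorem starInHom_of (hF : IsLinearFunctor k F) (x : C) (c : B) (y : {y : C // F.obj y = c})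
    (f : y.1 ⟶ x) :
    starInHom k F hF x c (of (fun y : {y : C // F.obj y = c} => y.1 ⟶ x) y f) =
      eqToHom y.2.symm ≫ F.map f :=
  toAddMonoid_of _ _ _

open Classical in
theorem IsCovering.aut1TransitiveOnFibre_target (hF : IsCovering k F) {y z : C} {f : y ⟶ z}
    (hf : f ≠ 0) (h : Aut1TransitiveOnFibre k F (F.obj y)) :
    Aut1TransitiveOnFibre k F (F.obj z) := by
  obtain ⟨hLin, -, hOut, hIn⟩ := hF
  refine aut1TransitiveOnFibre_of_forall_sameAut1Orbit fun z' hz' => ?_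
  by_contra hne
  refine hf (DirectSum.eq_zero_of_forall_exists_component_eq_zero (hIn z' (F.obj y)).2
    (hOut y (F.obj z')).1 (j₀ := ⟨z, hz'.symm⟩) ?_ f)
  rintro ⟨y', hy'⟩ m
  obtain ⟨s, hs, hsy⟩ := h y' y hy' rfl
  refine ⟨of _ ⟨s.obj z', Functor.congr_obj hs.2.2 z'⟩ (eqToHom hsy.symm ≫ s.map m),
    of_eq_of_ne _ _ _ fun heq => hne ⟨s, hs, congrArg Subtype.val heq.symm⟩, ?_⟩
  rw [starOutHom_of, starInHom_of]
  simp [Functor.map_map_of_comp_eq_self hs.2.2, eqToHom_map]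

open Classical in
theorem IsCovering.aut1TransitiveOnFibre_source (hF : IsCovering k F) {y z : C} {f : y ⟶ z}
    (hf : f ≠ 0) (h : Aut1TransitiveOnFibre k F (F.obj z)) :
    Aut1TransitiveOnFibre k F (F.obj y) := by
  obtain ⟨hLin, -, hOut, hIn⟩ := hF
  refine aut1TransitiveOnFibre_of_forall_sameAut1Orbit fun y' hy' => ?_
  by_contra hne
  refine hf (DirectSum.eq_zero_of_forall_exists_component_eq_zero (hOut y' (F.obj z)).2
    (hIn z (F.obj y')).1 (j₀ := ⟨y, hy'.symm⟩) ?_ f)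
  rintro ⟨z', hz'⟩ m
  obtain ⟨s, hs, hsz⟩ := h z' z hz' rfl
  refine ⟨of _ ⟨s.obj y', Functor.congr_obj hs.2.2 y'⟩ (s.map m ≫ eqToHom hsz),
    of_eq_of_ne _ _ _ fun heq => hne ⟨s, hs, congrArg Subtype.val heq.symm⟩, ?_⟩
  rw [starOutHom_of, starInHom_of]
  simp [Functor.map_map_of_comp_eq_self hs.2.2, eqToHom_map]

theorem IsGaloisCovering.aut1TransitiveOnFibre (hF : IsGaloisCovering k F) (b : B) :
    Aut1TransitiveOnFibre k F b := by
  obtain ⟨hcov, hconn, b₀, hb₀⟩ := hF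
  obtain ⟨y₀, rfl⟩ := hcov.2.1 b₀
  obtain ⟨y, rfl⟩ := hcov.2.1 b
  have hiff : ∀ a a' : C, Relation.EqvGen (fun p q : C => ∃ f : p ⟶ q, f ≠ 0) a a' →
      (Aut1TransitiveOnFibre k F (F.obj a) ↔ Aut1TransitiveOnFibre k F (F.obj a')) := by
    intro a a' h
    induction h with
    | rel p q hpq =>
      obtain ⟨f, hf⟩ := hpq
      exact ⟨hcov.aut1TransitiveOnFibre_target hf, hcov.aut1TransitiveOnFibre_source hf⟩
    | refl => exact Iff.rfl
    | symm _ _ _ ih => exact ih.symm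
    | trans _ _ _ _ _ ih ih' => exact ih.trans ih'
  exact (hiff y₀ y (hconn y₀ y)).1 hb₀

open Classical in
theorem IsCovering.mem_closure_gradeSet (hF : IsCovering k F) {x : B → C}
    (hx : ∀ b, F.obj (x b) = b) {b c : B} (hc : Aut1TransitiveOnFibre k F c) (f : b ⟶ c) :
    f ∈ AddSubmonoid.closure {g | ∃ s, MemAut1 k F s ∧ g ∈ gradeSet F x s b c} := by
  obtain ⟨hLin, -, hOut, -⟩ := hF
  obtain ⟨ξ, hξ⟩ := (hOut (x b) c).2 (eqToHom (hx b) ≫ f)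
  obtain rfl : eqToHom (hx b).symm ≫ starOutHom k F hLin (x b) c ξ = f := by simp [hξ]
  clear hξ
  induction ξ using DirectSum.induction_on with
  | zero => simp
  | of w u =>
    obtain ⟨s, hs, hsx⟩ := hc (x c) w.1 (hx c) w.2
    refine AddSubmonoid.subset_closure ⟨s, hs, (hx b).symm, hsx ▸ w.2, u ≫ eqToHom hsx.symm, ?_⟩
    simp [starOutHom_of, eqToHom_map]
  | add ξ ξ' ih ih' =>
    rw [map_add, Preadditive.comp_add]
    exact add_mem ih ih'

end Covering

theorem euler_derivations_differ_by_inner (k : Type w) [CommRing k]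
    {C : Type u} [Category.{v} C] [Preadditive C] [CategoryTheory.Linear k C]
    {B : Type u} [Category.{v} B] [Preadditive B] [CategoryTheory.Linear k B]
    (F : C ⥤ B) (hF : IsGaloisCovering k F)
    (x : B → C) (hx : ∀ b : B, F.obj (x b) = b)
    (t : B → (C ⥤ C)) (ht : ∀ b : B, MemAut1 k F (t b))
    (χ : (C ⥤ C) → k)
    (hχ : ∀ s s' : C ⥤ C, MemAut1 k F s → MemAut1 k F s' → χ (s ⋙ s') = χ s + χ s')
    (D D' : ∀ b c : B, (b ⟶ c) →ₗ[k] (b ⟶ c))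
    (hD : ∀ (s : C ⥤ C), MemAut1 k F s → ∀ (b c : B) (f : b ⟶ c),
      f ∈ gradeSet F x s b c → D b c f = χ s • f)
    (hD' : ∀ (s : C ⥤ C), MemAut1 k F s → ∀ (b c : B) (f : b ⟶ c),
      f ∈ gradeSet F (fun b => (t b).obj (x b)) s b c → D' b c f = χ s • f) :
    ∀ (b c : B) (f : b ⟶ c),
      D b c f - D' b c f = (χ (t c) - χ (t b)) • f ∧
      D b c f - D' b c f = f ≫ (χ (t c) • 𝟙 c) - (χ (t b) • 𝟙 b) ≫ f := by
  intro b c f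
  have hdiff : D b c f - D' b c f = (χ (t c) - χ (t b)) • f := by
    obtain ⟨tci, htci, htc, -⟩ := (ht c).exists_inv
    have hf := hF.1.mem_closure_gradeSet hx (hF.aut1TransitiveOnFibre c) f
    induction hf using AddSubmonoid.closure_induction with
    | mem g hg =>
      obtain ⟨s, hs, hg⟩ := hg
      have hg' := gradeSet_subset_gradeSet_translate (ht b).2.2 (Functor.congr_obj htc (x c)) hg
      rw [hD s hs b c g hg, hD' _ (htci.comp (hs.comp (ht b))) b c g hg',
        hχ _ _ htci (hs.comp (ht b)), hχ _ _ hs (ht b), map_eq_neg_of_comp_eq_id hχ (ht c) htci htc]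
      module
    | zero => simp
    | add g g' _ _ ih ih' =>
      rw [map_add, map_add, smul_add, ← ih, ← ih']
      abel
  refine ⟨hdiff, ?_⟩
  rw [hdiff, Linear.comp_smul, Linear.smul_comp, Category.comp_id, Category.id_comp, sub_smul]
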